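/- Let M be a compact metric space with Borel probability measure m, f : M → M Borel measurable, and B ⊆ M a Borel set with B ⊆ f⁻¹(B) and m(B) > 0. Then there exists a nonempty compact f-invariant set K with m(B \ B(K)) = 0, which is minimal with this property: no proper nonempty compact f-invariant subset K' ⊊ K satisfies m(B \ B(K')) = 0. -/

import Mathlib

open MeasureTheory Filter Metric Set
open scoped Classical ENNReal Topology

/-- Frequency of visits, up to time `n - 1`, of the orbit of `x` to the
`ε`-neighborhood of `K`: `(1/n) · #{0 ≤ j ≤ n−1 : dist(f^j(x), K) < ε}`. -/
noncomputable def visitFreq {M : Type*} [MetricSpace M] (f : M → M) (K : Set M) (ε : ℝ)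
    (x : M) (n : ℕ) : ℝ :=
  (((Finset.range n).filter (fun j => infDist (f^[j] x) K < ε)).card : ℝ) / n

/-- Basin of statistical attraction of `K`. -/
def statBasin {M : Type*} [MetricSpace M] (f : M → M) (K : Set M) : Set M :=
  {x | ∀ ε > 0, Tendsto (fun n => visitFreq f K ε x n) atTop (𝓝 1)}

/-- The auxiliary basin `B_ε(K) = {x : liminf_n (1/n)·#{j < n : dist(f^j(x),K) < ε} > 1 − ε}`. -/
def statBasinEps {M : Type*} [MetricSpace M] (f : M → M) (K : Set M) (ε : ℝ) : Set M :=
  {x | 1 - ε < atTop.liminf (fun n => visitFreq f K ε x n)}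

/-!
A decreasing chain of compact attractors has a compact nonempty intersection `K`, and by
compactness every `1/(k+1)`-neighbourhood of `K` contains some member `K_k` of the chain. A point
statistically attracted to all the `K_k` is statistically attracted to `K`, so `B \ B(K)` is covered
by the countably many null sets `B \ B(K_k)`. Zorn's lemma, started at `M` itself, then gives a
minimal attractor.
-/

section VisitFreq

variable {M : Type*} [MetricSpace M]

lemma visitFreq_le_one (f : M → M) (K : Set M) (ε : ℝ) (x : M) (n : ℕ) :
    visitFreq f K ε x n ≤ 1 := by
  rcases Nat.eq_zero_or_pos n with rfl | hn
  · simp [visitFreq]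
  · rw [visitFreq, div_le_one (by exact_mod_cast hn)]
    exact_mod_cast (Finset.card_filter_le _ _).trans (Finset.card_range n).le

lemma visitFreq_mono {K₁ K₂ : Set M} {ε₁ ε₂ : ℝ}
    (h : ∀ z : M, infDist z K₁ < ε₁ → infDist z K₂ < ε₂) (f : M → M) (x : M) (n : ℕ) :
    visitFreq f K₁ ε₁ x n ≤ visitFreq f K₂ ε₂ x n := by
  refine div_le_div_of_nonneg_right ?_ n.cast_nonneg
  exact_mod_cast Finset.card_le_card (Finset.monotone_filter_right _ fun j _ => h _)

lemma visitFreq_le_of_subset_thickening {L K : Set M} {δ : ℝ} (hL : L.Nonempty)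
    (hLK : L ⊆ thickening δ K) (f : M → M) (ε : ℝ) (x : M) (n : ℕ) :
    visitFreq f L ε x n ≤ visitFreq f K (ε + δ) x n := by
  refine visitFreq_mono (fun z hz => ?_) f x n
  obtain ⟨w, hwK, hzw⟩ : ∃ w ∈ K, dist z w < ε + δ :=
    mem_thickening_iff.mp <| thickening_thickening_subset ε δ K <|
      mem_thickening_iff.mpr <| ((infDist_lt_iff hL).mp hz).imp fun y hy => ⟨hLK hy.1, hy.2⟩
  exact (infDist_le_dist_of_mem hwK).trans_lt hzw

lemma mem_statBasin_of_subset_thickening {f : M → M} {K : Set M} {x : M}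
    (h : ∀ δ > 0, ∃ L : Set M, L.Nonempty ∧ L ⊆ thickening δ K ∧ x ∈ statBasin f L) :
    x ∈ statBasin f K := by
  intro ε hε
  obtain ⟨L, hL, hLK, hx⟩ := h (ε / 2) (half_pos hε)
  have hbound (n : ℕ) : visitFreq f L (ε / 2) x n ≤ visitFreq f K ε x n := by
    simpa using visitFreq_le_of_subset_thickening hL hLK f (ε / 2) x n
  exact tendsto_of_tendsto_of_tendsto_of_le_of_le (hx (ε / 2) (half_pos hε))
    tendsto_const_nhds hbound (visitFreq_le_one f K ε x)

lemma statBasin_univ [Nonempty M] (f : M → M) : statBasin f (univ : Set M) = univ := by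
  refine eq_univ_of_forall fun x ε hε => tendsto_const_nhds.congr' ?_
  filter_upwards [eventually_ne_atTop 0] with n hn
  simp [visitFreq, infDist_zero_of_mem (mem_univ _), hε, hn]

end VisitFreq

section Attractors

variable {M : Type*} [MetricSpace M] [MeasurableSpace M]

def statAttractors (m : Measure M) (f : M → M) (B : Set M) : Set (Set M) :=
  {K | K.Nonempty ∧ IsCompact K ∧ f ⁻¹' K = K ∧ m (B \ statBasin f K) = 0}

lemma univ_mem_statAttractors [CompactSpace M] [Nonempty M] (m : Measure M) (f : M → M)
    (B : Set M) : univ ∈ statAttractors m f B :=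
  ⟨univ_nonempty, isCompact_univ, preimage_univ, by simp [statBasin_univ]⟩

lemma measure_diff_statBasin_iInter_eq_zero {ι : Type*} [Nonempty ι] {m : Measure M}
    {f : M → M} {B : Set M} {V : ι → Set M} (hV : Directed (· ⊇ ·) V)
    (hVne : ∀ i, (V i).Nonempty) (hVcpt : ∀ i, IsCompact (V i))
    (hVnull : ∀ i, m (B \ statBasin f (V i)) = 0) :
    m (B \ statBasin f (⋂ i, V i)) = 0 := by
  have hVcl (i : ι) : IsClosed (V i) := (hVcpt i).isClosed
  have hnear (k : ℕ) : ∃ i, V i ⊆ thickening (1 / (k + 1 : ℝ)) (⋂ i, V i) :=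
    exists_subset_nhds_of_isCompact' hV hVcpt hVcl fun x hx =>
      isOpen_thickening.mem_nhds (self_subset_thickening Nat.one_div_pos_of_nat _ hx)
  choose i hi using hnear
  have hcover : B \ statBasin f (⋂ i, V i) ⊆ ⋃ k, B \ statBasin f (V (i k)) := by
    rw [← sdiff_iInter]
    refine sdiff_subset_sdiff_right fun x hx => mem_statBasin_of_subset_thickening fun δ hδ => ?_
    obtain ⟨k, hk⟩ := exists_nat_one_div_lt hδ
    exact ⟨V (i k), hVne _, (hi k).trans (thickening_mono hk.le _), mem_iInter.mp hx k⟩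
  exact measure_mono_null hcover (measure_iUnion_null fun k => hVnull (i k))

lemma exists_lowerBound_mem_statAttractors {m : Measure M} {f : M → M} {B : Set M}
    {c : Set (Set M)} (hcS : c ⊆ statAttractors m f B) (hc : IsChain (· ⊆ ·) c)
    (hcne : c.Nonempty) : ∃ K ∈ statAttractors m f B, ∀ s ∈ c, K ⊆ s := by
  have : Nonempty c := hcne.to_subtype
  let V : c → Set M := Subtype.val
  have hV : Directed (· ⊇ ·) V := fun i j =>
    (hc.total i.2 j.2).elim (fun h => ⟨i, le_rfl, h⟩) fun h => ⟨j, h, le_rfl⟩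
  have hVne (i : c) : (V i).Nonempty := (hcS i.2).1
  have hVcpt (i : c) : IsCompact (V i) := (hcS i.2).2.1
  refine ⟨⋂ i, V i, ⟨?_, ?_, ?_, ?_⟩, fun s hs => iInter_subset V ⟨s, hs⟩⟩
  · exact IsCompact.nonempty_iInter_of_directed_nonempty_isCompact_isClosed V hV hVne hVcpt
      fun i => (hVcpt i).isClosed
  · exact (hVcpt (Classical.arbitrary c)).of_isClosed_subset
      (isClosed_iInter fun i => (hVcpt i).isClosed) (iInter_subset V _)
  · rw [preimage_iInter]
    exact iInter_congr fun i => (hcS i.2).2.2.1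
  · exact measure_diff_statBasin_iInter_eq_zero hV hVne hVcpt fun i => (hcS i.2).2.2.2

end Attractors

theorem exists_minimal_statAttractor_attracting_general {M : Type*} [MetricSpace M] [CompactSpace M]
    [MeasurableSpace M] (m : Measure M)
    (f : M → M) (B : Set M) (hBm : 0 < m B) :
    ∃ K : Set M, K.Nonempty ∧ IsCompact K ∧ f ⁻¹' K = K ∧
      m (B \ statBasin f K) = 0 ∧
      ∀ K' : Set M, K' ⊆ K → K' ≠ K → K'.Nonempty → IsCompact K' → f ⁻¹' K' = K' →
        m (B \ statBasin f K') ≠ 0 := by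
  have : Nonempty M := (nonempty_of_measure_ne_zero hBm.ne').to_type
  obtain ⟨K, -, hKmin⟩ := zorn_superset_nonempty (statAttractors m f B)
    (fun _ => exists_lowerBound_mem_statAttractors) univ (univ_mem_statAttractors m f B)
  obtain ⟨hKne, hKcpt, hKinv, hKnull⟩ := hKmin.prop
  refine ⟨K, hKne, hKcpt, hKinv, hKnull, fun K' hK'K hne hK'ne hK'cpt hK'inv hK'null => ?_⟩
  exact hne (hKmin.eq_of_subset ⟨hK'ne, hK'cpt, hK'inv, hK'null⟩ hK'K)

/-- existence of a statistical attractor minimal attracting a forward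
invariant set `B` of positive measure: a nonempty compact `f`-invariant `K` with
`m(B \ B(K)) = 0`, minimal with this property. -/
theorem exists_minimal_statAttractor_attracting {M : Type*} [MetricSpace M] [CompactSpace M]
    [MeasurableSpace M] [BorelSpace M] (m : Measure M) [IsProbabilityMeasure m]
    (f : M → M) (hf : Measurable f) (B : Set M) (hB : MeasurableSet B)
    (hBinv : B ⊆ f ⁻¹' B) (hBm : 0 < m B) :
    ∃ K : Set M, K.Nonempty ∧ IsCompact K ∧ f ⁻¹' K = K ∧
      m (B \ statBasin f K) = 0 ∧
      ∀ K' : Set M, K' ⊆ K → K' ≠ K → K'.Nonempty → IsCompact K' → f ⁻¹' K' = K' →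
        m (B \ statBasin f K') ≠ 0 :=
  exists_minimal_statAttractor_attracting_general m f B hBm
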